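/- arXiv:1708.04290 — 8 statements merged into one kernel-verified Lean document; each statement's English description precedes it below -/
import Mathlib

section
/- In the setting of the previous statement, define a new 'orientation' of the edge: output 0→1 if E₀* holds and 0←1 otherwise. Then Pr[¬E₀* ∩ E₀] ≤ p^{1/3} and Pr[E₀* ∩ E₁] ≤ 3p^{1/3}. -/
open MeasureTheory

theorem stmt4_aux {Ω : Type*} (m : MeasurableSpace Ω) {m0 : MeasurableSpace Ω}
    (μ : Measure Ω) [IsProbabilityMeasure μ] (hm : m ≤ m0)
    (E0 E1 : Set Ω) (hE0 : MeasurableSet E0) (hE1 : MeasurableSet E1)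
    (p : ℝ) (hp0 : 0 < p) (hp1 : p ≤ 1)
    (hjoint : μ (E0 ∩ E1) ≤ ENNReal.ofReal (2 * p))
    (hCI : μ[(E0 ∩ E1).indicator (fun _ => (1 : ℝ))|m]
        =ᵐ[μ] fun ω => (μ[E0.indicator (fun _ => (1 : ℝ))|m]) ω *
                        (μ[E1.indicator (fun _ => (1 : ℝ))|m]) ω) :
    μ ({ω | p ^ ((1 : ℝ) / 3) ≤ (μ[E0.indicator (fun _ => (1 : ℝ))|m]) ω}ᶜ ∩ E0)
        ≤ ENNReal.ofReal (p ^ ((1 : ℝ) / 3)) ∧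
    μ ({ω | p ^ ((1 : ℝ) / 3) ≤ (μ[E0.indicator (fun _ => (1 : ℝ))|m]) ω} ∩ E1)
        ≤ ENNReal.ofReal (3 * p ^ ((1 : ℝ) / 3)) := by
  set q : ℝ := p ^ ((1 : ℝ) / 3) with hqdef
  have hq0 : 0 < q := Real.rpow_pos_of_pos hp0 _
  have hq1 : q ≤ 1 := Real.rpow_le_one hp0.le hp1 (by norm_num)
  set f := μ[E0.indicator (fun _ => (1 : ℝ))|m] with hfdef
  set g := μ[E1.indicator (fun _ => (1 : ℝ))|m] with hgdef
  have hAm : MeasurableSet[m] {ω | q ≤ f ω} :=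
    measurableSet_le measurable_const stronglyMeasurable_condExp.measurable
  set A : Set Ω := {ω | q ≤ f ω} with hAdef
  have hAm0 : MeasurableSet[m0] A := hm _ hAm
  have hE0' : MeasurableSet[m0] E0 := hE0
  have hE1' : MeasurableSet[m0] E1 := hE1
  have hg0 : 0 ≤ᵐ[μ] g :=
    condExp_nonneg (Filter.Eventually.of_forall fun x =>
      Set.indicator_nonneg (fun _ _ => zero_le_one) x)
  have key : ∀ (s t : Set Ω), MeasurableSet[m0] s → MeasurableSet[m0] t →
      ∫ x in s, t.indicator (fun _ => (1 : ℝ)) x ∂μ = (μ (s ∩ t)).toReal := by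
    intro s t hs ht
    rw [← integral_indicator hs]
    simp_rw [Set.indicator_indicator]
    exact integral_indicator_one (hs.inter ht)
  -- First part
  have h1 : (μ (Aᶜ ∩ E0)).toReal ≤ q := by
    have e1 : (μ (Aᶜ ∩ E0)).toReal = ∫ x in Aᶜ, f x ∂μ := by
      rw [← key Aᶜ E0 hAm0.compl hE0',
        setIntegral_condExp hm ((integrable_const (1 : ℝ)).indicator hE0') hAm.compl]
    rw [e1]
    calc ∫ x in Aᶜ, f x ∂μ ≤ ∫ _x in Aᶜ, q ∂μ := by
          refine setIntegral_mono_on integrable_condExp.integrableOn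
            (integrableOn_const (measure_ne_top μ _)) hAm0.compl ?_
          intro x hx
          have hx' : ¬ q ≤ f x := hx
          exact (not_le.mp hx').le
      _ = (μ Aᶜ).toReal * q := by rw [setIntegral_const]; rfl
      _ ≤ 1 * q := by
          gcongr
          exact ENNReal.toReal_le_of_le_ofReal zero_le_one (by simpa using prob_le_one)
      _ = q := one_mul q
  -- Second part
  have h2 : (μ (A ∩ E1)).toReal ≤ 3 * q := by
    have e1 : (μ (A ∩ E1)).toReal = ∫ x in A, g x ∂μ := by
      rw [← key A E1 hAm0 hE1',
        setIntegral_condExp hm ((integrable_const (1 : ℝ)).indicator hE1') hAm]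
    have hfg_int : Integrable (fun ω => f ω * g ω) μ := integrable_condExp.congr hCI
    have e2 : q * ∫ x in A, g x ∂μ ≤ ∫ x in A, f x * g x ∂μ := by
      rw [← integral_const_mul]
      refine setIntegral_mono_ae_restrict (integrable_condExp.const_mul q).integrableOn
        hfg_int.integrableOn ?_
      filter_upwards [self_mem_ae_restrict hAm0, ae_restrict_of_ae hg0] with x hx hgx
      exact mul_le_mul_of_nonneg_right hx hgx
    have e3 : ∫ x in A, f x * g x ∂μ ≤ 2 * p := by
      have e : ∫ x in A, f x * g x ∂μ
          = ∫ x in A, (μ[(E0 ∩ E1).indicator (fun _ => (1 : ℝ))|m]) x ∂μ :=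
        integral_congr_ae (ae_restrict_of_ae hCI.symm)
      rw [e, setIntegral_condExp hm ((integrable_const (1 : ℝ)).indicator (hE0'.inter hE1')) hAm,
        key A _ hAm0 (hE0'.inter hE1')]
      refine ENNReal.toReal_le_of_le_ofReal (by positivity) ?_
      exact le_trans (measure_mono Set.inter_subset_right) hjoint
    have hpqq : p ≤ q * q := by
      have : q * q = p ^ ((2 : ℝ) / 3) := by
        rw [hqdef, ← Real.rpow_add hp0]; norm_num
      rw [this]
      calc p = p ^ (1 : ℝ) := (Real.rpow_one p).symm
        _ ≤ p ^ ((2 : ℝ) / 3) := Real.rpow_le_rpow_of_exponent_ge hp0 hp1 (by norm_num)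
    have : q * (μ (A ∩ E1)).toReal ≤ q * (3 * q) := by
      rw [e1]
      calc q * ∫ x in A, g x ∂μ ≤ 2 * p := le_trans e2 e3
        _ ≤ 3 * (q * q) := by nlinarith
        _ = q * (3 * q) := by ring
    exact le_of_mul_le_mul_left this hq0
  constructor
  · exact (ENNReal.le_ofReal_iff_toReal_le (measure_ne_top μ _) hq0.le).mpr h1
  · exact (ENNReal.le_ofReal_iff_toReal_le (measure_ne_top μ _) (by positivity)).mpr h2


/-- With `E₀* = {Pr[E₀|m] ≥ p^{1/3}}` and `E₁* = {Pr[E₁|m] ≥ p^{1/3}}`,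
orienting `0→1` iff `E₀*` holds: `Pr[¬E₀* ∩ E₀] ≤ p^{1/3}` and
`Pr[E₀* ∩ E₁] ≤ 3 p^{1/3}`. -/
theorem stmt4 {Ω : Type*} (m : MeasurableSpace Ω) {m0 : MeasurableSpace Ω} (μ : Measure Ω) [IsProbabilityMeasure μ]
    (hm : m ≤ m0)
    (E0 E1 : Set Ω) (hE0 : MeasurableSet E0) (hE1 : MeasurableSet E1)
    (p : ℝ) (hp0 : 0 < p) (hp1 : p ≤ 1)
    (hjoint : μ (E0 ∩ E1) ≤ ENNReal.ofReal (2 * p))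
    (hCI : μ[(E0 ∩ E1).indicator (fun _ => (1 : ℝ))|m]
        =ᵐ[μ] fun ω => (μ[E0.indicator (fun _ => (1 : ℝ))|m]) ω *
                        (μ[E1.indicator (fun _ => (1 : ℝ))|m]) ω) :
    μ ({ω | p ^ ((1 : ℝ) / 3) ≤ (μ[E0.indicator (fun _ => (1 : ℝ))|m]) ω}ᶜ ∩ E0)
        ≤ ENNReal.ofReal (p ^ ((1 : ℝ) / 3)) ∧
    μ ({ω | p ^ ((1 : ℝ) / 3) ≤ (μ[E0.indicator (fun _ => (1 : ℝ))|m]) ω} ∩ E1)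
        ≤ ENNReal.ofReal (3 * p ^ ((1 : ℝ) / 3)) :=
  stmt4_aux m μ hm E0 E1 hE0 hE1 p hp0 hp1 hjoint hCI
end

section
/- If a t-round sinkless orientation algorithm on the infinite randomly-edge-colored Δ-regular tree has failure probability p at each vertex, and each application of round elimination multiplies the failure probability by at most the map p ↦ 3p^{1/3} while reducing the time profile by one coordinate, then after t(2Δ−1) applications the resulting 0-round algorithm has failure probability p₀ satisfying p₀ ≤ C · p^{3^{−t(2Δ−1)}} for an absolute constant C. Combined with the lower bound p₀ ≥ 2^{−3Δ}, this yields t = Ω(Δ^{−1} log log p^{−1}). -/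
private lemma iter_bound (q : ℝ) (hq : 0 < q) :
    ∀ k : ℕ, 0 < (fun x : ℝ => 3 * x ^ ((1 : ℝ) / 3))^[k] q ∧
      (fun x : ℝ => 3 * x ^ ((1 : ℝ) / 3))^[k] q ≤ 3 ^ ((3 : ℝ) / 2) * q ^ ((3 : ℝ)⁻¹ ^ k) := by
  intro k
  induction k with
  | zero =>
    refine ⟨hq, ?_⟩
    simp only [Function.iterate_zero, id_eq, pow_zero, Real.rpow_one]
    nlinarith [Real.one_le_rpow (by norm_num : (1:ℝ) ≤ 3) (by norm_num : (0:ℝ) ≤ 3/2)]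
  | succ k ih =>
    obtain ⟨hpos, hle⟩ := ih
    rw [Function.iterate_succ_apply']
    constructor
    · positivity
    · have h1 : ((fun x : ℝ => 3 * x ^ ((1 : ℝ) / 3))^[k] q) ^ ((1:ℝ)/3)
          ≤ (3 ^ ((3 : ℝ) / 2) * q ^ ((3 : ℝ)⁻¹ ^ k)) ^ ((1:ℝ)/3) :=
        Real.rpow_le_rpow hpos.le hle (by norm_num)
      have h2 : (3 ^ ((3 : ℝ) / 2) * q ^ ((3 : ℝ)⁻¹ ^ k)) ^ ((1:ℝ)/3)
          = 3 ^ ((1 : ℝ) / 2) * q ^ ((3 : ℝ)⁻¹ ^ (k+1)) := by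
        rw [Real.mul_rpow (by positivity) (by positivity),
          ← Real.rpow_natCast (3:ℝ)⁻¹, ← Real.rpow_natCast (3:ℝ)⁻¹,
          ← Real.rpow_mul (by norm_num : (0:ℝ) ≤ 3),
          ← Real.rpow_mul hq.le]
        rw [show (3:ℝ)/2 * (1/3) = 1/2 by norm_num,
          show (3:ℝ)⁻¹ ^ (k:ℝ) * (1/3) = (3:ℝ)⁻¹ ^ ((k+1:ℕ):ℝ) by
            push_cast
            rw [Real.rpow_add (by norm_num : (0:ℝ) < 3⁻¹), Real.rpow_one]
            ring]
      calc 3 * ((fun x : ℝ => 3 * x ^ ((1 : ℝ) / 3))^[k] q) ^ ((1:ℝ)/3)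
          ≤ 3 * (3 ^ ((1 : ℝ) / 2) * q ^ ((3 : ℝ)⁻¹ ^ (k+1))) := by
            rw [← h2]; nlinarith [h1, Real.rpow_nonneg (le_of_lt hpos) ((1:ℝ)/3)]
        _ = 3 ^ ((3 : ℝ) / 2) * q ^ ((3 : ℝ)⁻¹ ^ (k+1)) := by
            rw [show (3:ℝ) ^ ((3:ℝ)/2) = 3 * 3 ^ ((1:ℝ)/2) by
              rw [show (3:ℝ)/2 = 1 + 1/2 by norm_num, Real.rpow_add (by norm_num),
                Real.rpow_one]]
            ring

/-- Analytic core of the round-elimination lower bound: iterating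
`f(q) = 3 q^{1/3}` `k` times gives `f^{(k)}(q) ≤ 3^{3/2} q^{3^{-k}}`, and if
`2^{-3Δ} ≤ 3^{3/2} q^{3^{-k}}` then
`k ≥ log₃( log(1/q) / (3Δ log 2 + (3/2) log 3) )`. -/
theorem stmt5 (q : ℝ) (hq : q ∈ Set.Ioo (0 : ℝ) 1) (k : ℕ) (Δ : ℕ) (hΔ : 1 ≤ Δ) :
    (fun x : ℝ => 3 * x ^ ((1 : ℝ) / 3))^[k] q ≤ 3 ^ ((3 : ℝ) / 2) * q ^ ((3 : ℝ)⁻¹ ^ k) ∧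
    ((2 : ℝ) ^ (-(3 * Δ : ℝ)) ≤ 3 ^ ((3 : ℝ) / 2) * q ^ ((3 : ℝ)⁻¹ ^ k) →
      Real.logb 3 (Real.log (1 / q) /
        (3 * Δ * Real.log 2 + 3 / 2 * Real.log 3)) ≤ (k : ℝ)) := by
  obtain ⟨hq0, hq1⟩ := hq
  refine ⟨(iter_bound q hq0 k).2, fun h => ?_⟩
  have hΔ1 : (1:ℝ) ≤ (Δ:ℝ) := by exact_mod_cast hΔ
  have hD : 0 < 3 * (Δ:ℝ) * Real.log 2 + 3 / 2 * Real.log 3 := by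
    have h2 := Real.log_pos (by norm_num : (1:ℝ) < 2)
    have h3 := Real.log_pos (by norm_num : (1:ℝ) < 3)
    nlinarith
  -- take logs of h
  have hlog : -(3 * (Δ:ℝ)) * Real.log 2 ≤
      (3:ℝ)/2 * Real.log 3 + (3:ℝ)⁻¹ ^ k * Real.log q := by
    have hL := Real.log_le_log (by positivity) h
    rwa [Real.log_rpow (by norm_num : (0:ℝ) < 2),
      Real.log_mul (by positivity) (ne_of_gt (Real.rpow_pos_of_pos hq0 _)),
      Real.log_rpow (by norm_num : (0:ℝ) < 3), Real.log_rpow hq0] at hL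
  have hlogq : Real.log (1/q) = -Real.log q := by
    rw [one_div, Real.log_inv]
  have hkey : Real.log (1/q) / (3 * (Δ:ℝ) * Real.log 2 + 3 / 2 * Real.log 3)
      ≤ (3:ℝ) ^ (k:ℝ) := by
    rw [div_le_iff₀ hD, hlogq]
    have he : (3:ℝ)⁻¹ ^ k * (-Real.log q) ≤ 3 * (Δ:ℝ) * Real.log 2 + 3/2 * Real.log 3 := by
      nlinarith [hlog]
    have h3k : (3:ℝ) ^ (k:ℝ) * (3:ℝ)⁻¹ ^ k = 1 := by
      rw [← Real.rpow_natCast (3:ℝ)⁻¹ k, Real.inv_rpow (by norm_num : (0:ℝ) ≤ 3),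
        mul_inv_cancel₀ (by positivity)]
    have h3kpos : (0:ℝ) < (3:ℝ) ^ (k:ℝ) := by positivity
    have hmul := mul_le_mul_of_nonneg_left he h3kpos.le
    rw [← mul_assoc, h3k, one_mul] at hmul
    linarith
  calc Real.logb 3 (Real.log (1 / q) / (3 * (Δ:ℝ) * Real.log 2 + 3 / 2 * Real.log 3))
      ≤ Real.logb 3 ((3:ℝ) ^ (k:ℝ)) := by
        apply Real.logb_le_logb_of_le (by norm_num : (1:ℝ) < 3) _ hkey
        apply div_pos _ hD
        rw [hlogq]
        have := Real.log_neg hq0 hq1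
        linarith
    _ = (k:ℝ) := Real.logb_rpow (by norm_num) (by norm_num)
end

section
/- Define sequences by d₁ = t₁ = Δ, p₁ = Δ(1+ξ), and the recurrences d_i = (1+δ_{i−1})d_{i−1}(1−(1−1/p_{i−1})^{2(t_{i−1}−1)}), t_i = (1+δ_{i−1})t_{i−1}(1−(t_{i−1}/p_{i−1})(1−1/p_{i−1})^{2t_{i−1}})(1−(1−1/p_{i−1})^{2t_{i−1}}), p_i = (1−δ_{i−1})p_{i−1}(1−(t_{i−1}/p_{i−1})(1−1/p_{i−1})^{2t_{i−1}})², with β_i = p_i/t_i − 1 and δ_i = β_i/η. Suppose at index i−1 we have min{d_{i−1},t_{i−1},p_{i−1}} = ω(log Δ), β_{i−1} = o(1/log Δ), and δ_{i−1} = o(β_{i−1}/log Δ). Then β_i = β_{i−1}(1 ± o(1/log Δ))/(1 − e^{−2}). -/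
/-!
Write `β = p/t - 1` and `q = (1 - 1/p)^{2t}`. Exactly,
`p_i/t_i - 1 = (β/(1-q) - δ(2 + β/(1-q)))/(1+δ)`, so, as `δ = o(β/log Δ)`, the claim reduces to
`q = e^{-2} + o(1/log Δ)`. Since `log(1 - 1/p) = -1/p + O(1/p²)`, the exponent `2t log(1 - 1/p)`
equals `-2 + 2(1 - t/p) + O(t/p²) = -2 + O(β) + O(1/p)`, which is `-2 + o(1/log Δ)` because
`β = o(1/log Δ)` and `p = ω(log Δ)`.
-/

open Filter Topology Asymptotics

section

variable {α : Type*} {l : Filter α}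

theorem tendsto_zero_of_tendsto_mul_atTop {f L : α → ℝ}
    (hfL : Tendsto (fun x => f x * L x) l (𝓝 0)) (hL : Tendsto L l atTop) :
    Tendsto f l (𝓝 0) :=
  (hfL.div_atTop hL).congr' <| by
    filter_upwards [hL.eventually_gt_atTop 0] with x hx using mul_div_cancel_right₀ _ hx.ne'

theorem abs_one_div_add_log_one_sub_one_div_le {p : ℝ} (hp : 2 ≤ p) :
    |1 / p + Real.log (1 - 1 / p)| ≤ 2 / p ^ 2 := by
  have hx : |1 / p| ≤ 1 / 2 := by
    rw [abs_of_pos (by positivity)]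
    exact one_div_le_one_div_of_le two_pos hp
  have h := Real.abs_log_sub_add_sum_range_le (hx.trans_lt (by norm_num)) 1
  simp only [Finset.sum_range_one, zero_add, pow_one, Nat.cast_zero, div_one] at h
  refine h.trans ?_
  rw [div_le_iff₀ (by linarith), sq_abs, div_pow, one_pow]
  calc 1 / p ^ 2 = 2 / p ^ 2 * (1 / 2) := by ring
    _ ≤ 2 / p ^ 2 * (1 - |1 / p|) := by gcongr; linarith

theorem abs_two_mul_log_one_sub_one_div_add_two_le {t p : ℝ} (hp : 2 ≤ p) :
    |2 * t * Real.log (1 - 1 / p) + 2| ≤ 4 * |t / p| / p + 2 * |1 - t / p| := by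
  have hp0 : 0 < p := by linarith
  have hsplit : 2 * t * Real.log (1 - 1 / p) + 2
      = 2 * t * (1 / p + Real.log (1 - 1 / p)) + 2 * (1 - t / p) := by
    field_simp
    ring
  have hlog : |2 * t * (1 / p + Real.log (1 - 1 / p))| ≤ 4 * |t / p| / p := by
    rw [abs_mul, abs_mul, abs_two, abs_div, abs_of_pos hp0]
    calc 2 * |t| * |1 / p + Real.log (1 - 1 / p)| ≤ 2 * |t| * (2 / p ^ 2) := by
          gcongr
          exact abs_one_div_add_log_one_sub_one_div_le hp
      _ = 4 * (|t| / p) / p := by field_simp; ring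
  rw [hsplit]
  refine (abs_add_le _ _).trans (add_le_add hlog ?_)
  rw [abs_mul, abs_two]

theorem tendsto_two_mul_log_one_sub_one_div_add_two_mul {t p L : α → ℝ}
    (hp : Tendsto p l atTop) (hpL : Tendsto (fun x => L x / p x) l (𝓝 0))
    (htp : Tendsto (fun x => t x / p x) l (𝓝 1))
    (hβ : Tendsto (fun x => (p x / t x - 1) * L x) l (𝓝 0)) :
    Tendsto (fun x => (2 * t x * Real.log (1 - 1 / p x) + 2) * L x) l (𝓝 0) := by
  have htpL : Tendsto (fun x => (1 - t x / p x) * L x) l (𝓝 0) := by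
    refine (by simpa using hβ.mul htp : Tendsto (fun x => (p x / t x - 1) * L x * (t x / p x))
      l (𝓝 0)).congr' ?_
    filter_upwards [htp.eventually_ne one_ne_zero] with x hx
    obtain ⟨ht, hp⟩ := div_ne_zero_iff.mp hx
    field_simp
  refine squeeze_zero_norm'
    (a := fun x => 4 * |t x / p x| * |L x / p x| + 2 * |(1 - t x / p x) * L x|) ?_ ?_
  · filter_upwards [hp.eventually_ge_atTop 2] with x hx
    rw [Real.norm_eq_abs, abs_mul]
    calc _ ≤ (4 * |t x / p x| / p x + 2 * |1 - t x / p x|) * |L x| :=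
          mul_le_mul_of_nonneg_right (abs_two_mul_log_one_sub_one_div_add_two_le hx) (abs_nonneg _)
      _ = _ := by rw [abs_mul, abs_div (L x), abs_of_pos (by linarith : 0 < p x)]; ring
  · simpa using ((htp.abs.const_mul 4).mul hpL.abs).add (htpL.abs.const_mul 2)

theorem tendsto_exp_sub_one_mul {f L : α → ℝ} (hf : Tendsto f l (𝓝 0))
    (hfL : Tendsto (fun x => f x * L x) l (𝓝 0)) :
    Tendsto (fun x => (Real.exp (f x) - 1) * L x) l (𝓝 0) := by
  refine (IsBigO.of_bound 2 ?_).trans_tendsto hfL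
  filter_upwards [hf.abs.eventually (ge_mem_nhds (by norm_num : |(0 : ℝ)| < 1))] with x hx
  simp only [Real.norm_eq_abs, abs_mul]
  rw [← mul_assoc]
  exact mul_le_mul_of_nonneg_right (Real.abs_exp_sub_one_le hx) (abs_nonneg _)

theorem tendsto_one_sub_one_div_rpow_sub_exp_neg_two_mul {t p L : α → ℝ}
    (hL : Tendsto L l atTop) (hp : Tendsto p l atTop)
    (hpL : Tendsto (fun x => L x / p x) l (𝓝 0)) (htp : Tendsto (fun x => t x / p x) l (𝓝 1))
    (hβ : Tendsto (fun x => (p x / t x - 1) * L x) l (𝓝 0)) :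
    Tendsto (fun x => ((1 - 1 / p x) ^ (2 * t x) - Real.exp (-2)) * L x) l (𝓝 0) := by
  have hEL := tendsto_two_mul_log_one_sub_one_div_add_two_mul hp hpL htp hβ
  have h := (tendsto_exp_sub_one_mul (tendsto_zero_of_tendsto_mul_atTop hEL hL) hEL).const_mul
    (Real.exp (-2))
  rw [mul_zero] at h
  refine h.congr' ?_
  filter_upwards [hp.eventually_gt_atTop 1] with x hx
  have hpos : 0 < 1 - 1 / p x := by
    rw [sub_pos, div_lt_one (by linarith)]; exact hx
  have hexp : Real.exp (-2) * Real.exp (2 * t x * Real.log (1 - 1 / p x) + 2)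
      = Real.exp (2 * t x * Real.log (1 - 1 / p x)) := by
    rw [← Real.exp_add]; ring_nf
  rw [Real.rpow_def_of_pos hpos, mul_comm (Real.log _), ← hexp]
  ring

-- The right side is built from `(q - e) L`, `δ L / β`, `β`, `q`, `δ`, whose limits are known.
theorem step_error_eq {t p δ q e L : ℝ} (ht : t ≠ 0) (hp : p ≠ 0) (hβ : p / t - 1 ≠ 0)
    (hq : 1 - q ≠ 0) (hδ : 1 + δ ≠ 0) :
    (((1 - δ) * p * (1 - t / p * q) ^ 2 / ((1 + δ) * t * (1 - t / p * q) * (1 - q)) - 1)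
        * (1 - e) / (p / t - 1) - 1) * L
      = ((q - e) * L / (1 - q) - δ * L / (p / t - 1) * (p / t - 1)
          - δ * L / (p / t - 1) * (2 + (p / t - 1) / (1 - q)) * (1 - e)) / (1 + δ) := by
  have hpt : p - t ≠ 0 := by
    rwa [div_sub_one ht, div_ne_zero_iff, and_iff_left ht] at hβ
  have hratio : (1 - δ) * p * (1 - t / p * q) ^ 2 / ((1 + δ) * t * (1 - t / p * q) * (1 - q))
      = (1 - δ) * (p - t * q) / ((1 + δ) * t * (1 - q)) := by
    field_simp
  rw [hratio, div_sub_one ht]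
  field_simp
  ring

theorem tendsto_step_error {t p δ q L : α → ℝ} {e : ℝ} (he : e ≠ 1)
    (hL : Tendsto L l atTop) (hβne : ∀ᶠ x in l, p x / t x - 1 ≠ 0)
    (hβ : Tendsto (fun x => (p x / t x - 1) * L x) l (𝓝 0))
    (hδ : Tendsto (fun x => δ x * L x / (p x / t x - 1)) l (𝓝 0))
    (htp : Tendsto (fun x => t x / p x) l (𝓝 1))
    (hqL : Tendsto (fun x => (q x - e) * L x) l (𝓝 0)) :
    Tendsto (fun x => (((1 - δ x) * p x * (1 - t x / p x * q x) ^ 2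
        / ((1 + δ x) * t x * (1 - t x / p x * q x) * (1 - q x)) - 1)
        * (1 - e) / (p x / t x - 1) - 1) * L x) l (𝓝 0) := by
  have hβ0 := tendsto_zero_of_tendsto_mul_atTop hβ hL
  have hq : Tendsto q l (𝓝 e) :=
    tendsto_sub_nhds_zero_iff.mp (tendsto_zero_of_tendsto_mul_atTop hqL hL)
  have hδ0 : Tendsto δ l (𝓝 0) := by
    refine tendsto_zero_of_tendsto_mul_atTop (L := L) ?_ hL
    refine (by simpa using hδ.mul hβ0 : Tendsto (fun x => δ x * L x / (p x / t x - 1)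
      * (p x / t x - 1)) l (𝓝 0)).congr' ?_
    filter_upwards [hβne] with x hx using div_mul_cancel₀ _ hx
  have h1q : Tendsto (fun x => 1 - q x) l (𝓝 (1 - e)) := tendsto_const_nhds.sub hq
  have h1δ : Tendsto (fun x => 1 + δ x) l (𝓝 1) := by simpa using tendsto_const_nhds.add hδ0
  have he' : 1 - e ≠ 0 := sub_ne_zero.mpr he.symm
  have h2 : Tendsto (fun x => 2 + (p x / t x - 1) / (1 - q x)) l (𝓝 (2 + 0 / (1 - e))) :=
    tendsto_const_nhds.add (hβ0.div h1q he')
  have hlim := (((hqL.div h1q he').sub (hδ.mul hβ0)).sub ((hδ.mul h2).mul_const (1 - e))).div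
    h1δ one_ne_zero
  simp only [zero_div, mul_zero, zero_mul, sub_zero] at hlim
  refine hlim.congr' ?_
  filter_upwards [hβne, htp.eventually_ne one_ne_zero, h1q.eventually_ne he',
    h1δ.eventually_ne one_ne_zero] with x hβx htpx hqx hδx
  obtain ⟨htx, hpx⟩ := div_ne_zero_iff.mp htpx
  exact (step_error_eq htx hpx hβx hqx hδx).symm

end

theorem stmt7_general (d' t' p' δ' : ℕ → ℝ)
    (hβpos : ∀ Δ, 0 < p' Δ / t' Δ - 1)
    (hmin : Tendsto (fun Δ : ℕ => min (d' Δ) (min (t' Δ) (p' Δ)) / Real.log Δ)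
      atTop atTop)
    (hβ : Tendsto (fun Δ : ℕ => (p' Δ / t' Δ - 1) * Real.log Δ) atTop (nhds 0))
    (hδ : Tendsto (fun Δ : ℕ => δ' Δ * Real.log Δ / (p' Δ / t' Δ - 1)) atTop (nhds 0)) :
    Tendsto (fun Δ : ℕ =>
      let β := p' Δ / t' Δ - 1
      let a := 1 - t' Δ / p' Δ * (1 - 1 / p' Δ) ^ (2 * t' Δ)
      let b := 1 - (1 - 1 / p' Δ) ^ (2 * t' Δ)
      let ti := (1 + δ' Δ) * t' Δ * a * b
      let pi := (1 - δ' Δ) * p' Δ * a ^ 2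
      ((pi / ti - 1) * (1 - Real.exp (-2)) / β - 1) * Real.log Δ)
      atTop (nhds 0) := by
  have hL : Tendsto (fun Δ : ℕ => Real.log Δ) atTop atTop :=
    Real.tendsto_log_atTop.comp tendsto_natCast_atTop_atTop
  have hpL : Tendsto (fun Δ => p' Δ / Real.log Δ) atTop atTop := by
    refine tendsto_atTop_mono' _ ?_ hmin
    filter_upwards [hL.eventually_gt_atTop 0] with Δ hΔ
    gcongr
    exact (min_le_right _ _).trans (min_le_right _ _)
  have hp : Tendsto p' atTop atTop := by
    refine (hpL.atTop_mul_atTop₀ hL).congr' ?_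
    filter_upwards [hL.eventually_gt_atTop 0] with Δ hΔ using div_mul_cancel₀ _ hΔ.ne'
  have htp : Tendsto (fun Δ => t' Δ / p' Δ) atTop (𝓝 1) := by
    simpa [inv_div] using
      ((tendsto_zero_of_tendsto_mul_atTop hβ hL).add_const 1).inv₀ (by norm_num)
  have hqL := tendsto_one_sub_one_div_rpow_sub_exp_neg_two_mul hL hp
    (by simpa [Pi.inv_def, inv_div] using hpL.inv_tendsto_atTop) htp hβ
  exact tendsto_step_error (by simp) hL (.of_forall fun Δ => (hβpos Δ).ne') hβ hδ htp hqL

/-- One step of the parameter recurrences: with `β_{i-1} = p_{i-1}/t_{i-1} - 1`,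
`δ_{i-1} = β_{i-1}/η`, under `min{d,t,p} = ω(log Δ)`, `β_{i-1} = o(1/log Δ)` and
`δ_{i-1} = o(β_{i-1}/log Δ)`, the next-step second-order error satisfies
`β_i = β_{i-1}(1 ± o(1/log Δ))/(1 - e^{-2})`, where
`t_i = (1+δ)t(1 - (t/p)(1-1/p)^{2t})(1 - (1-1/p)^{2t})` and
`p_i = (1-δ)p(1 - (t/p)(1-1/p)^{2t})²`. -/
theorem stmt7 (d' t' p' η δ' : ℕ → ℝ)
    (hη : ∀ Δ, 1 ≤ η Δ)
    (hd'pos : ∀ Δ, 0 < d' Δ) (ht'pos : ∀ Δ, 0 < t' Δ) (hp'pos : ∀ Δ, 0 < p' Δ)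
    (hβpos : ∀ Δ, 0 < p' Δ / t' Δ - 1)
    (hδdef : ∀ Δ, δ' Δ = (p' Δ / t' Δ - 1) / η Δ)
    (hmin : Tendsto (fun Δ : ℕ => min (d' Δ) (min (t' Δ) (p' Δ)) / Real.log Δ)
      atTop atTop)
    (hβ : Tendsto (fun Δ : ℕ => (p' Δ / t' Δ - 1) * Real.log Δ) atTop (nhds 0))
    (hδ : Tendsto (fun Δ : ℕ => δ' Δ * Real.log Δ / (p' Δ / t' Δ - 1)) atTop (nhds 0)) :
    Tendsto (fun Δ : ℕ =>
      let β := p' Δ / t' Δ - 1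
      let a := 1 - t' Δ / p' Δ * (1 - 1 / p' Δ) ^ (2 * t' Δ)
      let b := 1 - (1 - 1 / p' Δ) ^ (2 * t' Δ)
      let ti := (1 + δ' Δ) * t' Δ * a * b
      let pi := (1 - δ' Δ) * p' Δ * a ^ 2
      ((pi / ti - 1) * (1 - Real.exp (-2)) / β - 1) * Real.log Δ)
      atTop (nhds 0) :=
  stmt7_general d' t' p' δ' hβpos hmin hβ hδ
end

section
/- Let T be a rooted tree, v a vertex, and r ≥ 1, μ ≥ 2 integers. Let S be a set of vertices such that every vertex u with more than μ subtrees (components of T − u) containing an S-vertex within distance r of u belongs to S. Suppose v ∉ S. Let H be the set of 'highest' vertices of S in N^r(v): vertices u ∈ S at distance at most r from v with no proper ancestor (toward v) in S. Then |H| ≤ μ^r. -/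
/-!
Root the graph at `x` and let `H(x, k)` be the highest `S`-vertices within distance `k` of `x`.
If `x ∉ S`, a shortest path from `x` to any `u ∈ H(x, k + 1)` leaves `x` through a neighbour `w`
that witnesses an `S`-vertex within distance `r` of `x`, and `u ∈ H(w, k)`; by the closure
property there are at most `μ` such neighbours. If `x ∈ S` then `H(x, k) ⊆ {x}`. Induction on `k`
gives `|H(x, k)| ≤ μ ^ k` for `k ≤ r`.
-/

namespace SimpleGraph

variable {V : Type*} {G : SimpleGraph V}

-- In a tree, `dist x u = dist x w + dist w u` says that `w` is an ancestor of `u` for the root `x`.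
def highestWithin (G : SimpleGraph V) (S : Set V) (x : V) (k : ℕ) : Set V :=
  {u | u ∈ S ∧ G.dist x u ≤ k ∧ ∀ w, w ≠ u → G.dist x u = G.dist x w + G.dist w u → w ∉ S}

-- In a tree, the neighbour `w` of `u` indexes the component of `G - u` containing it, and
-- `s` lies in that component iff `dist u s = dist w s + 1`.
def nearBranches (G : SimpleGraph V) (S : Set V) (r : ℕ) (u : V) : Set V :=
  {w | G.Adj u w ∧ ∃ s ∈ S, G.dist u s ≤ r ∧ G.dist u s = G.dist w s + 1}

lemma Reachable.exists_adj_dist_eq_add_one {x u : V} (h : G.Reachable x u) (hne : x ≠ u) :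
    ∃ w, G.Adj x w ∧ G.dist x u = G.dist w u + 1 := by
  obtain ⟨p, hp⟩ := h.exists_walk_length_eq_dist
  cases p with
  | nil => exact absurd rfl hne
  | @cons _ w _ hadj q =>
    have hq : G.dist w u ≤ q.length := dist_le q
    have htri : G.dist x u ≤ G.dist x w + G.dist w u := hadj.reachable.dist_triangle_left u
    have hxw : G.dist x w = 1 := dist_eq_one_iff_adj.mpr hadj
    rw [Walk.length_cons] at hp
    exact ⟨w, hadj, by omega⟩

variable {S : Set V} {x : V} {k r : ℕ}

lemma highestWithin_subset_singleton_of_mem (hx : x ∈ S) : G.highestWithin S x k ⊆ {x} :=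
  fun u ⟨_, _, hhigh⟩ => by_contra fun hne => hhigh x (Ne.symm hne) (by simp) hx

lemma highestWithin_zero_subset_singleton (hG : G.Connected) : G.highestWithin S x 0 ⊆ {x} :=
  fun _ ⟨_, hdist, _⟩ => (hG.dist_eq_zero_iff.mp (Nat.le_zero.mp hdist)).symm

lemma highestWithin_succ_subset (hG : G.Connected) (hx : x ∉ S) (hk : k + 1 ≤ r) :
    G.highestWithin S x (k + 1) ⊆ ⋃ w ∈ G.nearBranches S r x, G.highestWithin S w k := by
  rintro u ⟨huS, hdist, hhigh⟩
  have hxu : x ≠ u := by rintro rfl; exact hx huS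
  obtain ⟨w, hadj, hstep⟩ := (hG x u).exists_adj_dist_eq_add_one hxu
  refine Set.mem_biUnion ⟨hadj, u, huS, by omega, hstep⟩ ⟨huS, by omega, ?_⟩
  intro w' hw' hgeo
  -- a shortest `w`-`u` path through `w'` extends to a shortest `x`-`u` path through `w'`
  have h₁ : G.dist x u ≤ G.dist x w' + G.dist w' u := hG.dist_triangle
  have h₂ : G.dist x w' ≤ G.dist x w + G.dist w w' := hG.dist_triangle
  have hxw : G.dist x w = 1 := dist_eq_one_iff_adj.mpr hadj
  exact hhigh w' hw' (by omega)

theorem ncard_highestWithin_le [Finite V] (hG : G.Connected) {μ : ℕ} (hμ : 0 < μ)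
    (hclosed : ∀ u, μ < (G.nearBranches S r u).ncard → u ∈ S) (hk : k ≤ r) (x : V) :
    (G.highestWithin S x k).ncard ≤ μ ^ k := by
  have singleton_bound : ∀ {j y}, G.highestWithin S y j ⊆ {y} →
      (G.highestWithin S y j).ncard ≤ μ ^ j := fun hsub =>
    (Set.ncard_le_ncard hsub (Set.finite_singleton _)).trans
      ((Set.ncard_singleton _).trans_le (Nat.one_le_pow _ _ hμ))
  induction k generalizing x with
  | zero => exact singleton_bound (highestWithin_zero_subset_singleton hG)
  | succ k ih =>
    by_cases hx : x ∈ S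
    · exact singleton_bound (highestWithin_subset_singleton_of_mem hx)
    have hB := Set.toFinite (G.nearBranches S r x)
    have hBcard : hB.toFinset.card ≤ μ := by
      rw [← Set.ncard_eq_toFinset_card _ hB]
      exact not_lt.mp (mt (hclosed x) hx)
    calc (G.highestWithin S x (k + 1)).ncard
        ≤ (⋃ w ∈ hB.toFinset, G.highestWithin S w k).ncard :=
          Set.ncard_le_ncard (by simpa using highestWithin_succ_subset hG hx hk) (Set.toFinite _)
      _ ≤ ∑ w ∈ hB.toFinset, (G.highestWithin S w k).ncard := Finset.set_ncard_biUnion_le _ _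
      _ ≤ hB.toFinset.card * μ ^ k :=
          Finset.sum_le_card_nsmul _ _ _ fun w _ => ih (by omega) w
      _ ≤ μ ^ (k + 1) := by rw [pow_succ']; exact Nat.mul_le_mul_right _ hBcard

end SimpleGraph

theorem stmt9_general {V : Type*} [Fintype V] (T : SimpleGraph V) (hT : T.IsTree)
    (v : V) (r μ : ℕ) (hμ : 2 ≤ μ) (S : Set V)
    (hclosed : ∀ u : V,
      μ < {w | T.Adj u w ∧ ∃ s ∈ S, T.dist u s ≤ r ∧
        T.dist u s = T.dist w s + 1}.ncard → u ∈ S) :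
    {u | u ∈ S ∧ T.dist v u ≤ r ∧
      ∀ w, w ≠ u → T.dist v u = T.dist v w + T.dist w u → w ∉ S}.ncard ≤ μ ^ r :=
  SimpleGraph.ncard_highestWithin_le hT.connected (by omega) hclosed le_rfl v

/-- In a tree rooted at `v`, if `S` is closed under "more than `μ` subtrees of `u`
contain an `S`-vertex within distance `r`", and `v ∉ S`, then the set of highest
`S`-vertices within distance `r` of `v` has size at most `μ^r`.  A neighbor `w`
of `u` indexes the component of `T - u` containing it; an `S`-vertex `s` within
distance `r` of `u` lies in `w`'s component iff `dist u s = dist w s + 1`. -/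
theorem stmt9 {V : Type*} [Fintype V] (T : SimpleGraph V) (hT : T.IsTree)
    (v : V) (r μ : ℕ) (hr : 1 ≤ r) (hμ : 2 ≤ μ) (S : Set V)
    (hclosed : ∀ u : V,
      μ < {w | T.Adj u w ∧ ∃ s ∈ S, T.dist u s ≤ r ∧
        T.dist u s = T.dist w s + 1}.ncard → u ∈ S)
    (hv : v ∉ S) :
    {u | u ∈ S ∧ T.dist v u ≤ r ∧
      ∀ w, w ≠ u → T.dist v u = T.dist v w + T.dist w u → w ∉ S}.ncard ≤ μ ^ r :=
  stmt9_general T hT v r μ hμ S hclosed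
end

section
/- Consider the monotone process: U₀ ⊆ V, U_i = U_{i−1} ∪ {u : deg-condition(U_{i−1}, u) > μ/2} for 1 ≤ i ≤ τ; then L₀ = U_τ and L_i = L_{i−1} \ {u ∈ L_{i−1} \ U₀ : deg-condition(L_{i−1}, u) ≤ μ}, and L_{τ+1} = {u : deg-condition(L_τ, u) > μ}. Then no vertex belongs to both U_τ \ L_τ and L_{τ+1}, where deg-condition(S,u) counts the number of distinct subtrees of u in the tree T containing an S-vertex within distance r of u. -/
/-- `hatDeg T r S u` is the number of distinct subtrees of `u` (components of
`T - u`, indexed by the neighbors of `u`) containing an `S`-vertex within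
distance `r` of `u`. -/
noncomputable def hatDeg {V : Type*} (T : SimpleGraph V) (r : ℕ) (S : Set V) (u : V) : ℕ :=
  {w | T.Adj u w ∧ ∃ s ∈ S, T.dist u s ≤ r ∧ T.dist u s = T.dist w s + 1}.ncard

/-- In the `Find-Small-Stable-Set` process (`U` grows with threshold `μ/2`,
then `L` shrinks from `U_τ` with threshold `μ`), no vertex belongs to both
`U_τ \ L_τ` and `L_{τ+1} = {u : hatDeg_{L_τ}(u) > μ}`. -/
theorem stmt10 {V : Type*} [Fintype V] (T : SimpleGraph V) (hT : T.IsTree)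
    (r μ τ : ℕ) (U L : ℕ → Set V) (Lτ1 : Set V)
    (hU : ∀ i, 1 ≤ i → i ≤ τ →
      U i = U (i - 1) ∪ {u | μ / 2 < hatDeg T r (U (i - 1)) u})
    (hL0 : L 0 = U τ)
    (hL : ∀ i, 1 ≤ i → i ≤ τ →
      L i = L (i - 1) \
        {u | u ∈ L (i - 1) ∧ u ∉ U 0 ∧ hatDeg T r (L (i - 1)) u ≤ μ})
    (hLτ1 : Lτ1 = {u | μ < hatDeg T r (L τ) u}) :
    ∀ u : V, ¬ (u ∈ U τ \ L τ ∧ u ∈ Lτ1) := by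
  intro u ⟨⟨huU, huL⟩, huLτ1⟩
  rw [hLτ1] at huLτ1
  have hmono : ∀ S S' : Set V, S ⊆ S' → hatDeg T r S u ≤ hatDeg T r S' u := by
    intro S S' hSS
    apply Set.ncard_le_ncard _ (Set.toFinite _)
    rintro w ⟨hadj, s, hs, h1, h2⟩
    exact ⟨hadj, s, hSS hs, h1, h2⟩
  simp only [Set.mem_setOf_eq] at huLτ1
  -- L is decreasing up to τ
  have hdec : ∀ i, i ≤ τ → L τ ⊆ L i := by
    have key : ∀ k i, i + k ≤ τ → L (i + k) ⊆ L i := by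
      intro k
      induction k with
      | zero => intro i _; simp
      | succ n ih =>
        intro i h
        have step : L (i + (n + 1)) ⊆ L (i + n) := by
          rw [hL (i + (n + 1)) (by omega) (by omega)]
          have he : i + (n + 1) - 1 = i + n := by omega
          rw [he]
          exact Set.diff_subset
        exact step.trans (ih i (by omega))
    intro i hi
    have := key (τ - i) i (by omega)
    rwa [Nat.add_sub_cancel' hi] at this
  -- u stays in every L i
  have hstay : ∀ i, i ≤ τ → u ∈ L i := by
    intro i hi
    induction i with
    | zero => rw [hL0]; exact huU
    | succ n ih =>
      have hn : u ∈ L n := ih (by omega)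
      rw [hL (n + 1) (by omega) hi]
      simp only [Nat.add_sub_cancel]
      refine ⟨hn, ?_⟩
      intro ⟨_, _, hle⟩
      have := hmono (L τ) (L n) (hdec n (by omega))
      omega
  exact huL (hstay τ le_rfl)
end

section
/- Alternately applying Compress and Rake operations ⌈log_k n⌉ + 1 times removes all vertices from any n-vertex tree T, where Rake removes all leaves and isolated vertices, and Compress (with parameter k ≥ 2) removes all vertices v such that every vertex u in the closed neighborhood of v has degree at most k in the current tree. -/
/-- Degree of `v` inside the sub-forest induced on the vertex set `A`. -/
noncomputable def degIn {V : Type*} (T : SimpleGraph V) (A : Set V) (v : V) : ℕ :=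
  {w | w ∈ A ∧ T.Adj v w}.ncard

/-- Rake: remove all leaves and isolated vertices of the current forest. -/
noncomputable def rakeStep {V : Type*} (T : SimpleGraph V) (A : Set V) : Set V :=
  {v | v ∈ A ∧ 2 ≤ degIn T A v}

/-- Compress (parameter `k`): remove every vertex `v` such that every vertex in
the closed neighborhood of `v` (within the current forest) has degree at most `k`. -/
noncomputable def compressStep {V : Type*} (T : SimpleGraph V) (k : ℕ) (A : Set V) : Set V :=
  {v | v ∈ A ∧ ∃ u, (u = v ∨ (u ∈ A ∧ T.Adj v u)) ∧ k < degIn T A u}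

/-!
Root the tree at a vertex `r`. By induction on `i`, every vertex surviving `i` rounds has at least
`k ^ i` descendants (itself included). Indeed, suppose `v` survives round `i + 1` but has fewer
than `k ^ (i + 1)` descendants. Every descendant `x` of `v` still present after `i` rounds has
fewer than `k` surviving children, because their subtrees are disjoint, lie below `x` and have at
least `k ^ i` vertices each; counting its parent, `x` has degree at most `k`. So Compress deletes
every child of `v`, whose closed neighbourhood consists of descendants of `v`, after which `v` has
degree at most one and is raked. As `n ≤ k ^ ⌈log_k n⌉`, no vertex survives `⌈log_k n⌉ + 1` rounds.
-/

open Set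

lemma Set.Finite.ncard_mul_le_ncard_biUnion {ι α : Type*} {t : Set ι} {s : ι → Set α} {m : ℕ}
    (ht : t.Finite) (hs : ∀ i ∈ t, (s i).Finite) (hdisj : t.PairwiseDisjoint s)
    (hm : ∀ i ∈ t, m ≤ (s i).ncard) : t.ncard * m ≤ (⋃ i ∈ t, s i).ncard := by
  rw [ht.ncard_biUnion hs hdisj, finsum_mem_eq_finite_toFinset_sum _ ht,
    ncard_eq_toFinset_card t ht, ← smul_eq_mul]
  exact Finset.card_nsmul_le_sum _ _ _ fun i hi => hm i (ht.mem_toFinset.1 hi)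

namespace SimpleGraph

variable {V : Type*} {G : SimpleGraph V}

lemma IsTree.eq_of_adj_of_dist_lt (hG : G.IsTree) {r v u u' : V} (hu : G.Adj v u)
    (hu' : G.Adj v u') (hdu : G.dist r u < G.dist r v) (hdu' : G.dist r u' < G.dist r v) :
    u = u' := by
  classical
  obtain ⟨p, hp, -⟩ := hG.connected.exists_path_of_dist r v
  suffices ∀ w, G.Adj v w → G.dist r w < G.dist r v → w = p.penultimate from
    (this u hu hdu).trans (this u' hu' hdu').symm
  intro w hw hdw
  obtain ⟨q, hq, hql⟩ := hG.connected.exists_path_of_dist r w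
  have hvq : v ∉ q.support := fun hv => by
    have := (G.dist_le (q.takeUntil v hv)).trans (q.length_takeUntil_le_length hv)
    omega
  exact hG.isAcyclic.eq_penultimate_of_adj_end hp hw
    (hG.isAcyclic.mem_support_of_ne_mem_support_of_adj_of_isPath hp hq hw hvq)

/-- The subtree below `v` when `G` is rooted at `r`: the vertices `w` such that `v` lies on a
shortest path from `r` to `w`. -/
def subtree (G : SimpleGraph V) (r v : V) : Set V :=
  {w | G.dist r w = G.dist r v + G.dist v w}

def children (G : SimpleGraph V) (r v : V) : Set V :=
  {c | G.Adj v c ∧ G.dist r c = G.dist r v + 1}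

variable {r v c : V}

lemma mem_subtree_self : v ∈ G.subtree r v := by
  simp [subtree]

lemma Connected.subtree_subset (hG : G.Connected) {w : V} (hw : w ∈ G.subtree r v) :
    G.subtree r w ⊆ G.subtree r v := by
  intro x (hx : G.dist r x = G.dist r w + G.dist w x)
  have := hG.dist_triangle (u := r) (v := v) (w := x)
  have := hG.dist_triangle (u := v) (v := w) (w := x)
  change G.dist r w = G.dist r v + G.dist v w at hw
  change G.dist r x = G.dist r v + G.dist v x
  omega

lemma mem_subtree_of_mem_children (hc : c ∈ G.children r v) : c ∈ G.subtree r v := by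
  change G.dist r c = G.dist r v + G.dist v c
  rw [dist_eq_one_iff_adj.2 hc.1, hc.2]

lemma Connected.subtree_subset_diff (hG : G.Connected) (hc : c ∈ G.children r v) :
    G.subtree r c ⊆ G.subtree r v \ {v} := by
  refine fun w hw => ⟨hG.subtree_subset (mem_subtree_of_mem_children hc) hw, ?_⟩
  rintro rfl
  have : G.dist r w = G.dist r c + G.dist c w := hw
  have := hc.2
  omega

lemma IsTree.pairwiseDisjoint_subtree (hG : G.IsTree) :
    (G.children r v).PairwiseDisjoint (G.subtree r) := by
  intro c₁ hc₁ c₂ hc₂ hne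
  refine Set.disjoint_left.2 fun w (hw₁ : _ = _) (hw₂ : _ = _) => hne ?_
  have h₁ := hc₁.2
  have h₂ := hc₂.2
  have := hG.connected.dist_triangle (u := r) (v := v) (w := w)
  have := hG.connected.dist_triangle (u := v) (v := c₁) (w := w)
  rw [dist_eq_one_iff_adj.2 hc₁.1] at this
  refine hG.eq_of_adj_of_dist_lt (r := w) hc₁.1 hc₂.1 ?_ ?_ <;>
    rw [dist_comm, dist_comm (v := v)] <;> omega

lemma IsTree.mem_subtree_of_adj_of_mem_children (hG : G.IsTree) (hc : c ∈ G.children r v)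
    {u : V} (hu : G.Adj c u) : u ∈ G.subtree r v := by
  rcases hG.dist_eq_dist_add_one_of_adj r hu with hup | hdown
  · have := hc.2
    obtain rfl : u = v := hG.eq_of_adj_of_dist_lt (r := r) hu hc.1.symm (by omega) (by omega)
    exact mem_subtree_self
  · exact hG.connected.subtree_subset (mem_subtree_of_mem_children hc)
      (mem_subtree_of_mem_children ⟨hu, hdown⟩)

lemma IsTree.children_disjoint_compressStep (hG : G.IsTree) {A : Set V} {k : ℕ}
    (hdeg : ∀ x ∈ A ∩ G.subtree r v, degIn G A x ≤ k) :
    Disjoint (G.children r v) (compressStep G k A) := by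
  refine Set.disjoint_left.2 fun c hc ⟨hcA, u, hu, hku⟩ => (hku.trans_le (hdeg u ⟨?_, ?_⟩)).false
  · rcases hu with rfl | ⟨huA, -⟩ <;> assumption
  · rcases hu with rfl | ⟨-, hcu⟩
    · exact mem_subtree_of_mem_children hc
    · exact hG.mem_subtree_of_adj_of_mem_children hc hcu

noncomputable def contractionRound (G : SimpleGraph V) (k : ℕ) (A : Set V) : Set V :=
  rakeStep G (compressStep G k A)

variable [Finite V]

lemma IsTree.degIn_le_ncard_children_add_one (hG : G.IsTree) (r : V) (A : Set V) (v : V) :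
    degIn G A v ≤ (A ∩ G.children r v).ncard + 1 := by
  have hparent : {u | G.Adj v u ∧ G.dist r u < G.dist r v}.ncard ≤ 1 :=
    (ncard_le_one (toFinite _)).2 fun u hu u' hu' => hG.eq_of_adj_of_dist_lt hu.1 hu'.1 hu.2 hu'.2
  have hsub : {w | w ∈ A ∧ G.Adj v w} ⊆
      (A ∩ G.children r v) ∪ {u | G.Adj v u ∧ G.dist r u < G.dist r v} := by
    rintro w ⟨hwA, hvw⟩
    rcases hG.dist_eq_dist_add_one_of_adj r hvw with h | h
    · exact Or.inr ⟨hvw, by omega⟩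
    · exact Or.inl ⟨hwA, hvw, h⟩
  calc degIn G A v ≤ ((A ∩ G.children r v) ∪ {u | G.Adj v u ∧ G.dist r u < G.dist r v}).ncard :=
        ncard_le_ncard hsub (toFinite _)
    _ ≤ (A ∩ G.children r v).ncard + 1 := (ncard_union_le _ _).trans (by omega)

lemma IsTree.ncard_children_mul_le (hG : G.IsTree) {A : Set V} {m : ℕ}
    (hA : ∀ c ∈ A, m ≤ (G.subtree r c).ncard) :
    (A ∩ G.children r v).ncard * m ≤ (G.subtree r v).ncard - 1 :=
  calc (A ∩ G.children r v).ncard * m ≤ (⋃ c ∈ A ∩ G.children r v, G.subtree r c).ncard :=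
        (toFinite _).ncard_mul_le_ncard_biUnion (fun _ _ => toFinite _)
          (hG.pairwiseDisjoint_subtree.subset inter_subset_right) fun c hc => hA c hc.1
    _ ≤ (G.subtree r v \ {v}).ncard :=
        ncard_le_ncard (iUnion₂_subset fun _ hc => hG.connected.subtree_subset_diff hc.2)
          (toFinite _)
    _ = (G.subtree r v).ncard - 1 := ncard_sdiff_singleton_of_mem mem_subtree_self

lemma IsTree.degIn_le_of_ncard_subtree_lt (hG : G.IsTree) {A : Set V} {k i : ℕ}
    (hA : ∀ x ∈ A, k ^ i ≤ (G.subtree r x).ncard) (hv : (G.subtree r v).ncard < k ^ (i + 1)) :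
    degIn G A v ≤ k := by
  have hchildren : (A ∩ G.children r v).ncard < k := by
    refine Nat.lt_of_mul_lt_mul_right (a := k ^ i) ?_
    rw [← pow_succ']
    exact (hG.ncard_children_mul_le hA).trans_lt (by omega)
  have := hG.degIn_le_ncard_children_add_one r A v
  omega

lemma IsTree.pow_succ_le_ncard_subtree_of_mem_contractionRound (hG : G.IsTree) {A : Set V}
    {k i : ℕ} (hA : ∀ x ∈ A, k ^ i ≤ (G.subtree r x).ncard)
    (hv : v ∈ contractionRound G k A) : k ^ (i + 1) ≤ (G.subtree r v).ncard := by
  by_contra! hsmall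
  have hdeg : ∀ x ∈ A ∩ G.subtree r v, degIn G A x ≤ k := fun x hx =>
    hG.degIn_le_of_ncard_subtree_lt hA <|
      (ncard_le_ncard (hG.connected.subtree_subset hx.2) (toFinite _)).trans_lt hsmall
  have hleaf := hG.degIn_le_ncard_children_add_one r (compressStep G k A) v
  rw [inter_comm, (hG.children_disjoint_compressStep hdeg).inter_eq, ncard_empty] at hleaf
  exact absurd hv.2 (by omega)

lemma IsTree.pow_le_ncard_subtree_of_mem_iterate (hG : G.IsTree) {k : ℕ} (i : ℕ)
    (hv : v ∈ (contractionRound G k)^[i] univ) : k ^ i ≤ (G.subtree r v).ncard := by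
  induction i generalizing v with
  | zero => exact (ncard_pos (toFinite _)).2 ⟨v, mem_subtree_self⟩
  | succ i ih =>
    rw [Function.iterate_succ_apply'] at hv
    exact hG.pow_succ_le_ncard_subtree_of_mem_contractionRound (fun x hx => ih hx) hv

end SimpleGraph

/-- Alternately applying Compress and Rake `⌈log_k n⌉ + 1` times removes all
vertices from any `n`-vertex tree. -/
theorem stmt11 {V : Type*} [Fintype V] (T : SimpleGraph V) (hT : T.IsTree)
    (k : ℕ) (hk : 2 ≤ k) :
    (fun A => rakeStep T (compressStep T k A))^[Nat.clog k (Fintype.card V) + 1]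
      Set.univ = ∅ := by
  refine eq_empty_of_forall_notMem fun v hv => ?_
  have hsurvivor := hT.pow_le_ncard_subtree_of_mem_iterate (r := v) _ hv
  have hsubtree : (T.subtree v v).ncard ≤ Fintype.card V := by
    simpa using ncard_le_ncard (subset_univ (T.subtree v v))
  have hclog := Nat.le_pow_clog (b := k) (by omega) (Fintype.card V)
  have := Nat.pow_lt_pow_succ (a := k) (n := Nat.clog k (Fintype.card V)) (by omega)
  omega
end

section
/- Let T be a rooted tree in which the Rake operation (removing all leaves and isolated vertices) is applied 3d+1 times, followed by log s repetitions of one Compress operation (removing all vertices lying on a path of ≥ ℓ vertices all of degree ≤ 2) and ℓ−1 Rake operations. If T contains a distance-d dominating set S of size s, then all vertices of T are removed by this procedure. -/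
/-- `v` lies on a path of at least `ℓ` vertices of the current forest, all of
degree at most 2. -/
noncomputable def onLongDeg2Path {V : Type*} (T : SimpleGraph V) (ℓ : ℕ) (A : Set V) (v : V) :
    Prop :=
  ∃ (m : ℕ) (f : Fin m → V), ℓ ≤ m ∧ Function.Injective f ∧ (∀ i, f i ∈ A) ∧
    (∀ (i : ℕ) (h : i + 1 < m),
      T.Adj (f ⟨i, Nat.lt_of_succ_lt h⟩) (f ⟨i + 1, h⟩)) ∧
    (∀ i, degIn T A (f i) ≤ 2) ∧ (∃ i, f i = v)

/-- Compress (parameter `ℓ`): remove all vertices lying on a path of `≥ ℓ`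
vertices all of degree at most 2. -/
noncomputable def compressPathStep {V : Type*} (T : SimpleGraph V) (ℓ : ℕ) (A : Set V) : Set V :=
  {v | v ∈ A ∧ ¬ onLongDeg2Path T ℓ A v}

/-!
Root `T` at `r` and let `size v` be the number of vertices of `S` in the subtree of `v`. A vertex
that survives `k` Rakes has a descending path of `k` edges below it. A subtree containing at most
one vertex of `S` has height at most `3d`: on a branch of height `3d + 1`, the vertices at depth
`d` and `3d + 1` below its top are dominated from inside the subtree, hence by the same vertex,
although they are `2d + 1` apart. So the initial Rakes leave only vertices of size at least `2`.

If every surviving vertex has size `> n`, then a vertex of size `≤ 2n` has at most one surviving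
child, hence degree at most `2`, and so has every vertex below it. Had it survived the `ℓ - 1`
Rakes after a Compress, the descending path below it would have been a path of `ℓ` vertices of
degree at most `2`, deleted by that Compress. Each round thus doubles the lower bound on sizes,
which exceeds `s` after `⌈log₂ s⌉` rounds.
-/

open Finset

namespace SimpleGraph

variable {V : Type*} {T : SimpleGraph V}

lemma Connected.exists_dist_eq_of_le_dist (hconn : T.Connected) {v u : V} {i : ℕ}
    (hi : i ≤ T.dist v u) : ∃ m, T.dist v m = i ∧ T.dist m u = T.dist v u - i := by
  obtain ⟨p, hp⟩ := hconn.exists_walk_length_eq_dist v u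
  have h₁ : T.dist v (p.getVert i) ≤ i := (dist_le (p.take i)).trans (by simp)
  have h₂ : T.dist (p.getVert i) u ≤ T.dist v u - i := (dist_le (p.drop i)).trans (by simp [hp])
  have := hconn.dist_triangle (u := v) (v := p.getVert i) (w := u)
  exact ⟨p.getVert i, by omega, by omega⟩

lemma IsTree.length_eq_dist_of_isPath (hT : T.IsTree) {u v : V} {p : T.Walk u v}
    (hp : p.IsPath) : p.length = T.dist u v := by
  obtain ⟨q, hq, hql⟩ := hT.connected.exists_path_of_dist u v
  rw [(hT.existsUnique_path u v).unique hp hq, hql]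

lemma IsTree.mem_support_iff_dist_add_dist_eq (hT : T.IsTree) {u x v : V} {p : T.Walk u x}
    (hp : p.IsPath) : v ∈ p.support ↔ T.dist u v + T.dist v x = T.dist u x := by
  classical
  constructor
  · intro hv
    have hsplit := congrArg Walk.length (p.take_spec hv)
    rw [Walk.length_append] at hsplit
    rw [← hT.length_eq_dist_of_isPath hp, ← hT.length_eq_dist_of_isPath (hp.takeUntil hv),
      ← hT.length_eq_dist_of_isPath (hp.dropUntil hv), hsplit]
  · intro hv
    obtain ⟨p₁, -, hp₁⟩ := hT.connected.exists_path_of_dist u v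
    obtain ⟨p₂, -, hp₂⟩ := hT.connected.exists_path_of_dist v x
    have hlen : (p₁.append p₂).length = T.dist u x := by
      rw [Walk.length_append, hp₁, hp₂, hv]
    rw [(hT.existsUnique_path u x).unique hp (Walk.isPath_of_length_eq_dist _ hlen),
      Walk.mem_support_append_iff]
    exact Or.inl p₁.end_mem_support

lemma IsTree.eq_of_adj_of_dist_eq_add_one (hT : T.IsTree) {r v a b : V} (ha : T.Adj v a)
    (hb : T.Adj v b) (hda : T.dist r v = T.dist r a + 1) (hdb : T.dist r v = T.dist r b + 1) :
    a = b := by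
  obtain ⟨p, hp, -⟩ := hT.connected.exists_path_of_dist r v
  have hmem : ∀ {c}, T.Adj v c → T.dist r v = T.dist r c + 1 → c = p.penultimate := by
    intro c hc hdc
    refine hT.isAcyclic.eq_penultimate_of_adj_end hp hc ?_
    rw [hT.mem_support_iff_dist_add_dist_eq hp, dist_eq_one_iff_adj.2 hc.symm, hdc]
  rw [hmem ha hda, hmem hb hdb]

/-- In a tree rooted at `r`, this says that `v` lies on the path from `r` to `u`. -/
def IsDescendant (T : SimpleGraph V) (r v u : V) : Prop :=
  T.dist r u = T.dist r v + T.dist v u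

def IsChild (T : SimpleGraph V) (r v c : V) : Prop :=
  T.Adj v c ∧ T.dist r c = T.dist r v + 1

variable {r v c u x y : V}

lemma isDescendant_refl (r v : V) : T.IsDescendant r v v := by
  simp [IsDescendant]

lemma IsChild.isDescendant (h : T.IsChild r v c) : T.IsDescendant r v c := by
  rw [IsDescendant, h.2, dist_eq_one_iff_adj.2 h.1]

lemma IsDescendant.trans (hconn : T.Connected) (h₁ : T.IsDescendant r v c)
    (h₂ : T.IsDescendant r c u) : T.IsDescendant r v u := by
  have := hconn.dist_triangle (u := v) (v := c) (w := u)
  have := hconn.dist_triangle (u := r) (v := v) (w := u)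
  unfold IsDescendant at *
  omega

lemma IsTree.isChild_or_isChild (hT : T.IsTree) (r : V) {a b : V} (ha : T.Adj v a)
    (hb : T.Adj v b) (hab : a ≠ b) : T.IsChild r v a ∨ T.IsChild r v b := by
  rcases hT.dist_eq_dist_add_one_of_adj r ha with hda | hda
  · rcases hT.dist_eq_dist_add_one_of_adj r hb with hdb | hdb
    · exact absurd (hT.eq_of_adj_of_dist_eq_add_one ha hb hda hdb) hab
    · exact Or.inr ⟨hb, hdb⟩
  · exact Or.inl ⟨ha, hda⟩

lemma IsTree.dist_eq_add_of_isDescendant_of_not_isDescendant (hT : T.IsTree)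
    (hu : T.IsDescendant r v u) (hx : ¬ T.IsDescendant r v x) :
    T.dist u x = T.dist u v + T.dist v x := by
  classical
  obtain ⟨p, hp, -⟩ := hT.connected.exists_path_of_dist u x
  obtain ⟨q, hq, -⟩ := hT.connected.exists_path_of_dist r x
  have hv : v ∈ (q.append p.reverse).bypass.support := by
    rw [hT.mem_support_iff_dist_add_dist_eq (Walk.bypass_isPath _)]
    exact hu.symm
  rcases (Walk.mem_support_append_iff _ _).1 (Walk.support_bypass_subset_support _ hv)
    with hvq | hvp
  · exact absurd ((hT.mem_support_iff_dist_add_dist_eq hq).1 hvq).symm hx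
  · rw [Walk.support_reverse, List.mem_reverse] at hvp
    exact ((hT.mem_support_iff_dist_add_dist_eq hp).1 hvp).symm

lemma IsTree.eq_of_isDescendant_of_isDescendant (hT : T.IsTree) {c₁ c₂ : V}
    (hd : T.dist r c₁ = T.dist r c₂) (h₁ : T.IsDescendant r c₁ u) (h₂ : T.IsDescendant r c₂ u) :
    c₁ = c₂ := by
  rw [← hT.connected.dist_eq_zero_iff]
  by_cases h : T.IsDescendant r c₁ c₂
  · unfold IsDescendant at h
    omega
  · have := hT.dist_eq_add_of_isDescendant_of_not_isDescendant h₁ h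
    rw [dist_comm (u := u), dist_comm (u := u)] at this
    unfold IsDescendant at h₁ h₂
    omega

lemma IsTree.isDescendant_of_dist_le (hT : T.IsTree) {m w : V} {d : ℕ}
    (hm : T.IsDescendant r v m) (hvm : d ≤ T.dist v m) (hmw : T.dist m w ≤ d) :
    T.IsDescendant r v w := by
  by_contra hw
  have hsep := hT.dist_eq_add_of_isDescendant_of_not_isDescendant hm hw
  have hvw : 0 < T.dist v w :=
    hT.connected.pos_dist_of_ne fun h ↦ hw (h ▸ isDescendant_refl r v)
  have := dist_comm (G := T) (u := m) (v := v)
  omega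

open scoped Classical in
/-- `size v` in the paper. -/
noncomputable def subtreeCard (T : SimpleGraph V) (r : V) (S : Finset V) (v : V) : ℕ :=
  #{u ∈ S | T.IsDescendant r v u}

section subtreeCard

open scoped Classical

variable (r : V) (S : Finset V)

lemma subtreeCard_le_card (v : V) : T.subtreeCard r S v ≤ #S :=
  card_le_card (filter_subset _ _)

lemma IsDescendant.subtreeCard_le (hconn : T.Connected) (h : T.IsDescendant r v u) :
    T.subtreeCard r S u ≤ T.subtreeCard r S v :=
  card_le_card fun _ hw ↦ by
    rw [mem_filter] at hw ⊢
    exact ⟨hw.1, h.trans hconn hw.2⟩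

lemma IsTree.subtreeCard_add_subtreeCard_le (hT : T.IsTree) {c₁ c₂ : V}
    (h₁ : T.IsChild r v c₁) (h₂ : T.IsChild r v c₂) (hne : c₁ ≠ c₂) :
    T.subtreeCard r S c₁ + T.subtreeCard r S c₂ ≤ T.subtreeCard r S v := by
  have hdisj : Disjoint {u ∈ S | T.IsDescendant r c₁ u} {u ∈ S | T.IsDescendant r c₂ u} :=
    disjoint_filter.2 fun _ _ hu₁ hu₂ ↦
      hne (hT.eq_of_isDescendant_of_isDescendant (h₁.2.trans h₂.2.symm) hu₁ hu₂)
  rw [subtreeCard, subtreeCard, ← card_union_of_disjoint hdisj, ← filter_or]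
  exact card_le_card fun u hu ↦ by
    rw [mem_filter] at hu ⊢
    exact ⟨hu.1, hu.2.elim (h₁.isDescendant.trans hT.connected)
      (h₂.isDescendant.trans hT.connected)⟩

variable {S} {d : ℕ}

/-- Two far-apart vertices deep inside the subtree of `v` are dominated from inside it, by
different vertices of `S`. -/
lemma IsTree.two_le_subtreeCard_of_dist_lt (hT : T.IsTree)
    (hdom : ∀ x, ∃ w ∈ S, T.dist x w ≤ d) (hx : T.IsDescendant r v x)
    (hy : T.IsDescendant r v y) (hvx : d ≤ T.dist v x) (hvy : d ≤ T.dist v y)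
    (hxy : 2 * d < T.dist x y) : 2 ≤ T.subtreeCard r S v := by
  obtain ⟨wx, hwxS, hwx⟩ := hdom x
  obtain ⟨wy, hwyS, hwy⟩ := hdom y
  have hne : wx ≠ wy := by
    rintro rfl
    have := hT.connected.dist_triangle (u := x) (v := wx) (w := y)
    rw [dist_comm (u := wx)] at this
    omega
  refine one_lt_card.2 ⟨wx, ?_, wy, ?_, hne⟩ <;> rw [mem_filter]
  exacts [⟨hwxS, hT.isDescendant_of_dist_le hx hvx hwx⟩,
    ⟨hwyS, hT.isDescendant_of_dist_le hy hvy hwy⟩]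

lemma IsTree.two_le_subtreeCard_of_dist_eq (hT : T.IsTree)
    (hdom : ∀ x, ∃ w ∈ S, T.dist x w ≤ d) (hu : T.IsDescendant r v u)
    (hvu : T.dist v u = 3 * d + 1) : 2 ≤ T.subtreeCard r S v := by
  obtain ⟨m, hvm, hmu⟩ :=
    hT.connected.exists_dist_eq_of_le_dist (v := v) (u := u) (i := d) (by omega)
  have := hT.connected.dist_triangle (u := r) (v := v) (w := m)
  have := hT.connected.dist_triangle (u := r) (v := m) (w := u)
  have hm : T.IsDescendant r v m := by
    unfold IsDescendant at hu ⊢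
    omega
  exact hT.two_le_subtreeCard_of_dist_lt r hdom hm hu (by omega) (by omega) (by omega)

end subtreeCard

end SimpleGraph

open SimpleGraph

section

variable {V : Type*} {T : SimpleGraph V}

lemma iterate_rakeStep_subset (T : SimpleGraph V) (k : ℕ) (A : Set V) :
    (rakeStep T)^[k] A ⊆ A := by
  induction k generalizing A with
  | zero => exact subset_rfl
  | succ k ih => exact (ih _).trans fun _ hv ↦ hv.1

lemma exists_adj_of_two_le_degIn {A : Set V} {v : V} (h : 2 ≤ degIn T A v) :
    ∃ a ∈ A, ∃ b ∈ A, a ≠ b ∧ T.Adj v a ∧ T.Adj v b := by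
  obtain ⟨a, b, ha, hb, hab⟩ :=
    (Set.one_lt_ncard_iff (Set.finite_of_ncard_pos (by unfold degIn at h; omega))).1 h
  exact ⟨a, ha.1, b, hb.1, hab, ha.2, hb.2⟩

lemma exists_adj_of_two_lt_degIn {A : Set V} {v : V} (h : 2 < degIn T A v) :
    ∃ a ∈ A, ∃ b ∈ A, ∃ c ∈ A, a ≠ b ∧ a ≠ c ∧ b ≠ c ∧ T.Adj v a ∧ T.Adj v b ∧ T.Adj v c := by
  obtain ⟨a, b, c, ha, hb, hc, hab, hac, hbc⟩ :=
    (Set.two_lt_ncard_iff (Set.finite_of_ncard_pos (by unfold degIn at h; omega))).1 h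
  exact ⟨a, ha.1, b, hb.1, c, hc.1, hab, hac, hbc, ha.2, hb.2, hc.2⟩

namespace SimpleGraph.IsTree

lemma exists_isChild_of_two_le_degIn (hT : T.IsTree) (r : V) {A : Set V} {v : V}
    (h : 2 ≤ degIn T A v) :
    ∃ c ∈ A, T.IsChild r v c := by
  obtain ⟨a, haA, b, hbA, hab, ha, hb⟩ := exists_adj_of_two_le_degIn h
  rcases hT.isChild_or_isChild r ha hb hab with hc | hc
  exacts [⟨a, haA, hc⟩, ⟨b, hbA, hc⟩]

lemma exists_isChild_isChild_of_two_lt_degIn (hT : T.IsTree) (r : V) {A : Set V} {v : V}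
    (h : 2 < degIn T A v) :
    ∃ c₁ ∈ A, ∃ c₂ ∈ A, c₁ ≠ c₂ ∧ T.IsChild r v c₁ ∧ T.IsChild r v c₂ := by
  obtain ⟨a, haA, b, hbA, c, hcA, hab, hac, hbc, ha, hb, hc⟩ := exists_adj_of_two_lt_degIn h
  rcases hT.isChild_or_isChild r ha hb hab with ha' | hb'
  · rcases hT.isChild_or_isChild r hb hc hbc with hb' | hc'
    exacts [⟨a, haA, b, hbA, hab, ha', hb'⟩, ⟨a, haA, c, hcA, hac, ha', hc'⟩]
  · rcases hT.isChild_or_isChild r ha hc hac with ha' | hc'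
    exacts [⟨a, haA, b, hbA, hab, ha', hb'⟩, ⟨b, hbA, c, hcA, hbc, hb', hc'⟩]

lemma exists_descending_path_of_mem_iterate_rakeStep (hT : T.IsTree) (r : V) {C : Set V} :
    ∀ {k : ℕ} {v : V}, v ∈ (rakeStep T)^[k] C →
      ∃ q : ℕ → V, q 0 = v ∧ (∀ j < k, T.Adj (q j) (q (j + 1))) ∧
        ∀ j ≤ k, q j ∈ C ∧ T.IsDescendant r v (q j) ∧ T.dist v (q j) = j := by
  intro k
  induction k with
  | zero =>
    intro v hv
    refine ⟨fun _ ↦ v, rfl, by simp, fun j hj ↦ ?_⟩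
    obtain rfl : j = 0 := by omega
    exact ⟨hv, isDescendant_refl r v, dist_self⟩
  | succ k ih =>
    intro v hv
    rw [Function.iterate_succ_apply'] at hv
    obtain ⟨c, hcA, hc⟩ := hT.exists_isChild_of_two_le_degIn r hv.2
    obtain ⟨q, hq0, hadj, hq⟩ := ih hcA
    refine ⟨fun | 0 => v | j + 1 => q j, rfl, ?_, ?_⟩
    · rintro (_ | j) hj
      · simpa [hq0] using hc.1
      · exact hadj j (by omega)
    · rintro (_ | j) hj
      · exact ⟨iterate_rakeStep_subset T k C hv.1, isDescendant_refl r v, dist_self⟩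
      · obtain ⟨hqC, hqdesc, hqdist⟩ := hq j (by omega)
        have hvq := hc.isDescendant.trans hT.connected hqdesc
        refine ⟨hqC, hvq, ?_⟩
        have := hc.2
        unfold IsDescendant at hvq hqdesc
        show T.dist v (q j) = j + 1
        omega

lemma degIn_le_two_of_subtreeCard_le (hT : T.IsTree) {r : V} {S : Finset V} {A : Set V}
    {n : ℕ}
    (hA : ∀ x ∈ A, n < T.subtreeCard r S x) {v : V} (hv : T.subtreeCard r S v ≤ 2 * n) :
    degIn T A v ≤ 2 := by
  by_contra! h
  obtain ⟨c₁, hc₁A, c₂, hc₂A, hne, hc₁, hc₂⟩ := hT.exists_isChild_isChild_of_two_lt_degIn r h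
  have := hT.subtreeCard_add_subtreeCard_le r S hc₁ hc₂ hne
  have := hA c₁ hc₁A
  have := hA c₂ hc₂A
  omega

lemma two_le_subtreeCard_of_mem_iterate_rakeStep (hT : T.IsTree) {r : V} {S : Finset V}
    {d : ℕ} (hdom : ∀ x, ∃ w ∈ S, T.dist x w ≤ d) {C : Set V} {v : V}
    (hv : v ∈ (rakeStep T)^[3 * d + 1] C) : 2 ≤ T.subtreeCard r S v := by
  obtain ⟨q, -, -, hq⟩ := hT.exists_descending_path_of_mem_iterate_rakeStep r hv
  obtain ⟨-, hdesc, hdist⟩ := hq (3 * d + 1) le_rfl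
  exact hT.two_le_subtreeCard_of_dist_eq r hdom hdesc hdist

lemma lt_subtreeCard_of_mem_iterate_rakeStep_compressPathStep (hT : T.IsTree) {r : V}
    {S : Finset V} {A : Set V} {n ℓ : ℕ}
    (hA : ∀ x ∈ A, n < T.subtreeCard r S x) {v : V}
    (hv : v ∈ (rakeStep T)^[ℓ - 1] (compressPathStep T ℓ A)) : 2 * n < T.subtreeCard r S v := by
  by_contra! hv_le
  obtain ⟨q, hq0, hadj, hq⟩ := hT.exists_descending_path_of_mem_iterate_rakeStep r hv
  have hvC : v ∈ compressPathStep T ℓ A := iterate_rakeStep_subset T _ _ hv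
  refine hvC.2 ⟨ℓ - 1 + 1, fun j ↦ q j, by omega, fun i j hij ↦ ?_, fun j ↦ (hq j (by omega)).1.1,
    fun j hj ↦ hadj j (by omega), fun j ↦ ?_, ⟨0, by omega⟩, hq0⟩
  · have hi := (hq i (by omega)).2.2
    have hj := (hq j (by omega)).2.2
    simp only at hij
    rw [hij] at hi
    exact Fin.ext (hi.symm.trans hj)
  · have hle := (hq j (by omega)).2.1.subtreeCard_le r S hT.connected
    exact hT.degIn_le_two_of_subtreeCard_le hA (hle.trans hv_le)

end SimpleGraph.IsTree

end

theorem stmt12_general {V : Type*} (T : SimpleGraph V) (hT : T.IsTree)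
    (d s ℓ : ℕ)
    (S : Finset V) (hScard : S.card = s)
    (hdom : ∀ v : V, ∃ u ∈ S, T.dist v u ≤ d) :
    (fun A => (rakeStep T)^[ℓ - 1] (compressPathStep T ℓ A))^[Nat.clog 2 s]
      ((rakeStep T)^[3 * d + 1] Set.univ) = ∅ := by
  obtain ⟨r⟩ := hT.connected.nonempty
  have hsize : ∀ i, ∀ v ∈ (fun A => (rakeStep T)^[ℓ - 1] (compressPathStep T ℓ A))^[i]
      ((rakeStep T)^[3 * d + 1] Set.univ), 2 ^ i < T.subtreeCard r S v := by
    intro i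
    induction i with
    | zero => exact fun v hv ↦ hT.two_le_subtreeCard_of_mem_iterate_rakeStep hdom hv
    | succ i ih =>
      intro v hv
      rw [Function.iterate_succ_apply'] at hv
      rw [pow_succ']
      exact hT.lt_subtreeCard_of_mem_iterate_rakeStep_compressPathStep ih hv
  refine Set.eq_empty_of_forall_notMem fun v hv ↦ ?_
  have := hsize _ v hv
  have := T.subtreeCard_le_card r S v
  have := Nat.le_pow_clog one_lt_two s
  omega

/-- If a tree `T` has a distance-`d` dominating set of size `s`, then `3d+1`
Rakes followed by `log s` repetitions of (one Compress and `ℓ-1` Rakes) remove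
all vertices of `T`. -/
theorem stmt12 {V : Type*} [Fintype V] (T : SimpleGraph V) (hT : T.IsTree)
    (d s ℓ : ℕ) (hℓ : 2 ≤ ℓ) (hs : 1 ≤ s)
    (S : Finset V) (hScard : S.card = s)
    (hdom : ∀ v : V, ∃ u ∈ S, T.dist v u ≤ d) :
    (fun A => (rakeStep T)^[ℓ - 1] (compressPathStep T ℓ A))^[Nat.clog 2 s]
      ((rakeStep T)^[3 * d + 1] Set.univ) = ∅ :=
  stmt12_general T hT d s ℓ S hScard hdom
end

section
/- Define sequences by n₁ = k, l₋₁ = l₀ = 0, n_{i+1} = k·⌊(n_i + l_{i−2})/k'⌋ for i ≥ 1, and l_i = (n_i + l_{i−2}) mod k' for i ≥ 1, where 1 ≤ k' < k are integers. Then n_i = Θ((k/k')^i); in particular n_i ≥ (k/k')^{i−1} · k' for all i ≥ 1 (for k ≥ 2k' this simplifies), and n_i ≤ k·(k/k')^{i−1} · C for a constant C depending only on k/k'. -/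
/-!
Write `r = k/k'`. The recurrence says exactly `k' n_{i+1} + k l_i = k (n_i + l_{i-2})`, so
`n_{i+1} = r (n_i + l_{i-2} - l_i)` with all leftovers in `[0, k')`; this gives the one-step
bounds and, by induction, the upper bound `n_i + A ≤ A rⁱ` with `A = k k'/(k - k')`.
For the lower bound, the leftovers may keep `n_i` from growing for a while, so one follows the
mass `M_i = n_i + l_{i-1} + l_{i-2}` instead: it satisfies `k M_{i+1} = k M_i + (k - k') n_{i+1}`,
hence grows by at least one per step, and `M_i - 2k'` grows geometrically with ratio `r` as
soon as it is positive, which happens by step `2k' + 1`.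
-/

structure LayerRecurrence (k k' : ℕ) (n l : ℕ → ℕ) : Prop where
  n_one : n 1 = k
  l_zero : l 0 = 0
  n_succ : ∀ i, 1 ≤ i → n (i + 1) = k * ((n i + l (i - 2)) / k')
  l_eq : ∀ i, 1 ≤ i → l i = (n i + l (i - 2)) % k'

def layerMass (n l : ℕ → ℕ) (i : ℕ) : ℝ := n i + l (i - 1) + l (i - 2)

namespace LayerRecurrence

variable {k k' : ℕ} {n l : ℕ → ℕ} {i : ℕ}

theorem l_lt (h : LayerRecurrence k k' n l) (hk' : 0 < k') (j : ℕ) : l j < k' := by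
  rcases j with _ | j
  · simpa [h.l_zero]
  · rw [h.l_eq _ j.succ_pos]
    exact Nat.mod_lt _ hk'

theorem mul_n_succ_add (h : LayerRecurrence k k' n l) (hi : 1 ≤ i) :
    k' * n (i + 1) + k * l i = k * (n i + l (i - 2)) := by
  rw [h.n_succ i hi, h.l_eq i hi]
  conv_rhs => rw [← Nat.div_add_mod (n i + l (i - 2)) k']
  ring

theorem n_succ_eq (h : LayerRecurrence k k' n l) (hk' : 0 < k') (hi : 1 ≤ i) :
    (n (i + 1) : ℝ) = k / k' * (n i + l (i - 2) - l i) := by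
  have key : (k' * n (i + 1) + k * l i : ℝ) = k * (n i + l (i - 2)) := by
    exact_mod_cast h.mul_n_succ_add hi
  have hk'R : (k' : ℝ) ≠ 0 := by exact_mod_cast hk'.ne'
  rw [div_mul_eq_mul_div, eq_div_iff hk'R]
  linarith

theorem n_succ_bounds (h : LayerRecurrence k k' n l) (hk' : 0 < k') (hi : 1 ≤ i) :
    (k : ℝ) / k' * ((n i + l (i - 2) : ℕ) : ℝ) - k ≤ (n (i + 1) : ℝ) ∧
      (n (i + 1) : ℝ) ≤ (k : ℝ) / k' * ((n i + l (i - 2) : ℕ) : ℝ) := by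
  have hr : (0 : ℝ) ≤ k / k' := by positivity
  have hl : (l i : ℝ) < k' := by exact_mod_cast h.l_lt hk' i
  have hrk : (k : ℝ) / k' * k' = k := div_mul_cancel₀ _ (by positivity)
  rw [h.n_succ_eq hk' hi]
  push_cast
  constructor <;> nlinarith [Nat.cast_nonneg (α := ℝ) (l i)]

theorem k_le_n (h : LayerRecurrence k k' n l) (hk' : 0 < k') (hkk : k' ≤ k) (hi : 1 ≤ i) :
    k ≤ n i := by
  induction i, hi using Nat.le_induction with
  | base => exact h.n_one.ge
  | succ i hi ih =>
    have hq : 1 ≤ (n i + l (i - 2)) / k' := (Nat.one_le_div_iff hk').2 (by omega)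
    rw [h.n_succ i hi]
    exact Nat.le_mul_of_pos_right k hq

theorem mul_mass_succ (h : LayerRecurrence k k' n l) (hi : 1 ≤ i) :
    k * layerMass n l (i + 1) = k * layerMass n l i + (k - k') * n (i + 1) := by
  have key : (k' * n (i + 1) + k * l i : ℝ) = k * (n i + l (i - 2)) := by
    exact_mod_cast h.mul_n_succ_add hi
  simp only [layerMass, Nat.add_sub_cancel, show i + 1 - 2 = i - 1 by omega]
  linear_combination key

theorem mass_add_one_le (h : LayerRecurrence k k' n l) (hk' : 0 < k') (hkk : k' < k)
    (hi : 1 ≤ i) : layerMass n l i + 1 ≤ layerMass n l (i + 1) := by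
  have hn : (k : ℝ) ≤ n (i + 1) := by exact_mod_cast h.k_le_n hk' hkk.le (by omega)
  have hgap : (1 : ℝ) ≤ k - k' := by
    have : k' + 1 ≤ k := hkk
    rw [le_sub_iff_add_le']
    exact_mod_cast this
  have hk : (0 : ℝ) < k := by exact_mod_cast hk'.trans hkk
  have := h.mul_mass_succ hi
  nlinarith

theorem le_mass (h : LayerRecurrence k k' n l) (hk' : 0 < k') (hkk : k' < k) (hi : 1 ≤ i) :
    (i : ℝ) ≤ layerMass n l i := by
  induction i, hi using Nat.le_induction with
  | base =>
    have hk : (1 : ℝ) ≤ k := by exact_mod_cast hk'.trans hkk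
    simp only [layerMass, h.n_one, Nat.sub_self, h.l_zero]
    push_cast
    linarith
  | succ i hi ih =>
    push_cast
    linarith [h.mass_add_one_le hk' hkk hi]

theorem mass_sub_le_n_succ (h : LayerRecurrence k k' n l) (hk' : 0 < k') (hi : 1 ≤ i) :
    k * (layerMass n l i - 2 * k') ≤ k' * n (i + 1) := by
  have key : (k' * n (i + 1) + k * l i : ℝ) = k * (n i + l (i - 2)) := by
    exact_mod_cast h.mul_n_succ_add hi
  have hl₁ : (l (i - 1) : ℝ) ≤ k' := by exact_mod_cast (h.l_lt hk' _).le
  have hl₂ : (l i : ℝ) ≤ k' := by exact_mod_cast (h.l_lt hk' _).le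
  have hk : (0 : ℝ) ≤ k := k.cast_nonneg
  simp only [layerMass]
  nlinarith

theorem mass_sub_le_mass_succ_sub (h : LayerRecurrence k k' n l) (hk' : 0 < k') (hkk : k' < k)
    (hi : 1 ≤ i) :
    k * (layerMass n l i - 2 * k') ≤ k' * (layerMass n l (i + 1) - 2 * k') := by
  have hk : (0 : ℝ) < k := by exact_mod_cast hk'.trans hkk
  have hgap : (0 : ℝ) ≤ k - k' := by
    rw [sub_nonneg]
    exact_mod_cast hkk.le
  have hmass := h.mul_mass_succ hi
  have hn := mul_le_mul_of_nonneg_left (h.mass_sub_le_n_succ hk' hi) hgap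
  refine le_of_mul_le_mul_left ?_ hk
  nlinarith

theorem pow_le_mass_sub (h : LayerRecurrence k k' n l) (hk' : 0 < k') (hkk : k' < k) (j : ℕ) :
    ((k : ℝ) / k') ^ j ≤ layerMass n l (2 * k' + 1 + j) - 2 * k' := by
  have hk'R : (0 : ℝ) < k' := by exact_mod_cast hk'
  have hstart : (1 : ℝ) ≤ layerMass n l (2 * k' + 1) - 2 * k' := by
    have := h.le_mass hk' hkk (i := 2 * k' + 1) (by omega)
    push_cast at this
    linarith
  have hgeom := geom_le (u := fun j ↦ layerMass n l (2 * k' + 1 + j) - 2 * k')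
    (c := (k : ℝ) / k') (by positivity) j fun j _ ↦ by
      rw [div_mul_eq_mul_div, div_le_iff₀' hk'R]
      exact h.mass_sub_le_mass_succ_sub hk' hkk (by omega)
  have hpow : (0 : ℝ) ≤ ((k : ℝ) / k') ^ j := by positivity
  simp only [add_zero] at hgeom
  nlinarith

theorem pow_le_mul_n (h : LayerRecurrence k k' n l) (hk' : 0 < k') (hkk : k' < k)
    (hi : 1 ≤ i) : ((k : ℝ) / k') ^ i ≤ ((k : ℝ) / k') ^ (2 * k' + 1) * n i := by
  have hk'R : (0 : ℝ) < k' := by exact_mod_cast hk'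
  have hr : 1 ≤ (k : ℝ) / k' := by
    rw [one_le_div hk'R]
    exact_mod_cast hkk.le
  rcases le_or_gt i (2 * k' + 1) with hle | hgt
  · have hn : (1 : ℝ) ≤ n i := by
      exact_mod_cast (hk'.trans hkk).trans_le (h.k_le_n hk' hkk.le hi)
    calc ((k : ℝ) / k') ^ i ≤ ((k : ℝ) / k') ^ (2 * k' + 1) := pow_le_pow_right₀ hr hle
      _ ≤ _ := le_mul_of_one_le_right (by positivity) hn
  · obtain ⟨j, rfl⟩ : ∃ j, i = 2 * k' + 1 + j + 1 := ⟨i - (2 * k' + 2), by omega⟩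
    have hn : ((k : ℝ) / k') ^ (j + 1) ≤ n (2 * k' + 1 + j + 1) := by
      have hmass := h.mass_sub_le_n_succ hk' (i := 2 * k' + 1 + j) (by omega)
      rw [pow_succ', div_mul_eq_mul_div, div_le_iff₀' hk'R]
      nlinarith [h.pow_le_mass_sub hk' hkk j, k.cast_nonneg (α := ℝ)]
    rw [add_assoc, pow_add]
    gcongr
    exact hn

theorem n_add_le (h : LayerRecurrence k k' n l) (hk' : 0 < k') (hkk : k' < k) (hi : 1 ≤ i) :
    n i + (k * k' / (k - k') : ℝ) ≤ k * k' / (k - k') * ((k : ℝ) / k') ^ i := by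
  have hk'R : (0 : ℝ) < k' := by exact_mod_cast hk'
  have hgap : (0 : ℝ) < k - k' := by
    rw [sub_pos]
    exact_mod_cast hkk
  induction i, hi using Nat.le_induction with
  | base =>
    rw [h.n_one, pow_one]
    apply le_of_eq
    field_simp
    ring
  | succ i hi ih =>
    have hl : (l (i - 2) : ℝ) < k' := by exact_mod_cast h.l_lt hk' _
    have hr : (0 : ℝ) ≤ k / k' := by positivity
    have hfix : (k : ℝ) / k' * k' + k * k' / (k - k') = k / k' * (k * k' / (k - k')) := by
      field_simp
      ring
    rw [h.n_succ_eq hk' hi, pow_succ]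
    nlinarith [mul_le_mul_of_nonneg_left ih hr, Nat.cast_nonneg (α := ℝ) (l i)]

end LayerRecurrence

/-- Layer-size recurrences of the lower-bound construction: `n₁ = k`,
`l₋₁ = l₀ = 0`, `n_{i+1} = k⌊(n_i + l_{i-2})/k'⌋`, `l_i = (n_i + l_{i-2}) mod k'`
(with truncated subtraction encoding `l_{-1} = l_0 = 0`).  Then
`(k/k')(n_i + l_{i-2}) - k ≤ n_{i+1} ≤ (k/k')(n_i + l_{i-2})`, `l_i < k'`, and
`n_i = Θ((k/k')^i)`. -/
theorem stmt13 (k k' : ℕ) (hk' : 1 ≤ k') (hkk : k' < k)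
    (n l : ℕ → ℕ)
    (hn1 : n 1 = k) (hl0 : l 0 = 0)
    (hn : ∀ i, 1 ≤ i → n (i + 1) = k * ((n i + l (i - 2)) / k'))
    (hl : ∀ i, 1 ≤ i → l i = (n i + l (i - 2)) % k') :
    (∀ i, 1 ≤ i →
      (k : ℝ) / k' * ((n i + l (i - 2) : ℕ) : ℝ) - k ≤ (n (i + 1) : ℝ) ∧
      (n (i + 1) : ℝ) ≤ (k : ℝ) / k' * ((n i + l (i - 2) : ℕ) : ℝ) ∧
      l i < k') ∧
    ∃ c₁ c₂ : ℝ, 0 < c₁ ∧ 0 < c₂ ∧ ∀ i, 1 ≤ i →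
      c₁ * ((k : ℝ) / k') ^ i ≤ (n i : ℝ) ∧
      (n i : ℝ) ≤ c₂ * ((k : ℝ) / k') ^ i := by
  have h : LayerRecurrence k k' n l := ⟨hn1, hl0, hn, hl⟩
  have hk'R : (0 : ℝ) < k' := by exact_mod_cast hk'
  have hkR : (0 : ℝ) < k := by exact_mod_cast (show 0 < k by omega)
  have hr : (0 : ℝ) < k / k' := div_pos hkR hk'R
  have hgap : (0 : ℝ) < k - k' := by
    rw [sub_pos]
    exact_mod_cast hkk
  refine ⟨fun i hi ↦ ⟨(h.n_succ_bounds hk' hi).1, (h.n_succ_bounds hk' hi).2, h.l_lt hk' i⟩,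
    (((k : ℝ) / k') ^ (2 * k' + 1))⁻¹, k * k' / (k - k'), inv_pos.2 (pow_pos hr _),
    div_pos (mul_pos hkR hk'R) hgap,
    fun i hi ↦ ⟨?_, ?_⟩⟩
  · rw [inv_mul_le_iff₀ (pow_pos hr _)]
    exact h.pow_le_mul_n hk' hkk hi
  · linarith [h.n_add_le hk' hkk hi, div_nonneg (mul_pos hkR hk'R).le hgap.le]
end
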